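/- Let φ : X → ℝ and define edge resistance R(x, x') = r + max{φ(x), φ(x')} − φ(x') for r > 0 on the complete directed graph over a finite set X. For any two states x, x' ∈ X: if the minimum total resistance over all spanning arborescences rooted at x is at most that rooted at x', then φ(x) ≥ φ(x'). -/
import Mathlib


open scoped Classical

/-- Rerooting lemma: from an arborescence rooted at `x` we construct one rooted
at `x'` whose resistance is exactly the original plus `φ x - φ x'`. -/
lemma reroot_arborescence {X : Type*} [Fintype X]
    (φ : X → ℝ) (r : ℝ)
    (R : X → X → ℝ) (hR : ∀ a b, R a b = r + max (φ a) (φ b) - φ b)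
    (f : X → X) (x x' : X) (hfx : f x = x) (hreach : ∀ y, ∃ n, f^[n] y = x) :
    ∃ g : X → X, (g x' = x' ∧ ∀ y, ∃ n, g^[n] y = x') ∧
      ∑ z ∈ Finset.univ.erase x', R z (g z)
        = (∑ z ∈ Finset.univ.erase x, R z (f z)) + φ x - φ x' := by
  by_cases hxx : x' = x
  · subst hxx
    exact ⟨f, ⟨hfx, hreach⟩, by ring⟩
  · have hk : ∃ n, f^[n] x' = x := hreach x'
    set k := Nat.find hk with hkdef
    have hyk' : f^[k] x' = x := Nat.find_spec hk
    have hk0 : k ≠ 0 := by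
      intro h0
      rw [h0] at hyk'
      exact hxx hyk'
    set y : ℕ → X := fun i => f^[i] x' with hy
    have hyk : y k = x := hyk'
    have hy0 : y 0 = x' := rfl
    have hmin : ∀ m, m < k → y m ≠ x := fun m hm => Nat.find_min hk hm
    have hshift : ∀ i j, y (i + j) = f^[i] (y j) := fun i j =>
      Function.iterate_add_apply f i j x'
    have key : ∀ i j, i < j → j ≤ k → y i ≠ y j := by
      intro i j hij hjk he
      have h1 : f^[k - j] (y j) = x := by
        rw [← hshift, Nat.sub_add_cancel hjk, hyk]
      have h2 : y (k - j + i) = x := by rw [hshift, he, h1]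
      exact hmin (k - j + i) (by omega) h2
    have hy_inj : ∀ i j, i ≤ k → j ≤ k → y i = y j → i = j := by
      intro i j hi hj he
      rcases lt_trichotomy i j with h | h | h
      · exact absurd he (key i j h hj)
      · exact h
      · exact absurd he.symm (key j i h hi)
    set S : Finset X := (Finset.range (k + 1)).image y with hS
    have hxS : x ∈ S := by
      rw [hS]
      exact Finset.mem_image.mpr ⟨k, Finset.mem_range.mpr (by omega), hyk⟩
    have hx'S : x' ∈ S := by
      rw [hS]
      exact Finset.mem_image.mpr ⟨0, Finset.mem_range.mpr (by omega), hy0⟩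
    classical
    set g : X → X := fun z =>
      if hc : ∃ i, i < k ∧ z = y (i + 1) then y hc.choose
      else if z = x' then x' else f z with hg
    have hgx' : g x' = x' := by
      have hno : ¬ ∃ i, i < k ∧ x' = y (i + 1) := by
        rintro ⟨i, hi, he⟩
        have : (0 : ℕ) = i + 1 := hy_inj 0 (i + 1) (by omega) (by omega) (by rw [hy0]; exact he)
        omega
      simp [hg, hno]
    have hgstep : ∀ i, i < k → g (y (i + 1)) = y i := by
      intro i hi
      have hex : ∃ j, j < k ∧ y (i + 1) = y (j + 1) := ⟨i, hi, rfl⟩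
      have hspec := hex.choose_spec
      have heq : hex.choose = i := by
        have := hy_inj (hex.choose + 1) (i + 1) (by omega) (by omega) hspec.2.symm
        omega
      rw [hg]
      simp only [dif_pos hex]
      rw [heq]
    have hgout : ∀ z, z ∉ S → g z = f z := by
      intro z hz
      have h1 : ¬ ∃ i, i < k ∧ z = y (i + 1) := by
        rintro ⟨i, hi, rfl⟩
        exact hz (Finset.mem_image.mpr ⟨i + 1, Finset.mem_range.mpr (by omega), rfl⟩)
      have h2 : z ≠ x' := by
        rintro rfl
        exact hz hx'S
      simp [hg, h1, h2]
    have hpath : ∀ j, j ≤ k → g^[j] (y j) = x' := by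
      intro j
      induction j with
      | zero => intro _; exact hy0
      | succ n ih =>
        intro hj
        rw [Function.iterate_succ_apply, hgstep n (by omega)]
        exact ih (by omega)
    have hreach' : ∀ z, ∃ n, g^[n] z = x' := by
      intro z
      have hSex : ∃ n, f^[n] z ∈ S := by
        obtain ⟨n, hn⟩ := hreach z
        exact ⟨n, by rw [hn]; exact hxS⟩
      set m := Nat.find hSex with hmdef
      have hmS : f^[m] z ∈ S := Nat.find_spec hSex
      have hsame : ∀ i, i ≤ m → g^[i] z = f^[i] z := by
        intro i hi
        induction i with
        | zero => rfl
        | succ n ih =>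
          rw [Function.iterate_succ_apply', Function.iterate_succ_apply',
            ih (by omega), hgout]
          exact Nat.find_min hSex (by omega)
      obtain ⟨j, hj, hje⟩ := Finset.mem_image.mp hmS
      refine ⟨j + m, ?_⟩
      rw [Function.iterate_add_apply, hsame m le_rfl, ← hje]
      exact hpath j (Nat.lt_succ_iff.mp (Finset.mem_range.mp hj))
    -- sum computations
    have hsplit : ∀ (w : X), w ∈ S → ∀ (h : X → ℝ),
        ∑ z ∈ Finset.univ.erase w, h z
          = ∑ z ∈ S.erase w, h z + ∑ z ∈ Finset.univ \ S, h z := by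
      intro w hw h
      have hU : Finset.univ.erase w = S.erase w ∪ (Finset.univ \ S) := by
        ext z
        simp only [Finset.mem_erase, Finset.mem_union, Finset.mem_sdiff,
          Finset.mem_univ, true_and, and_true]
        constructor
        · intro hz
          by_cases hzS : z ∈ S
          · exact Or.inl ⟨hz, hzS⟩
          · exact Or.inr hzS
        · rintro (⟨hz, _⟩ | hz)
          · exact hz
          · rintro rfl; exact hz hw
      have hdisj : Disjoint (S.erase w) (Finset.univ \ S) := by
        rw [Finset.disjoint_left]
        intro a ha hb
        exact (Finset.mem_sdiff.mp hb).2 (Finset.mem_of_mem_erase ha)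
      rw [hU, Finset.sum_union hdisj]
    have hS1 : S.erase x' = (Finset.range k).image (fun i => y (i + 1)) := by
      ext z
      simp only [Finset.mem_erase, hS, Finset.mem_image, Finset.mem_range]
      constructor
      · rintro ⟨hz, i, hi, rfl⟩
        have hi0 : i ≠ 0 := by rintro rfl; exact hz hy0
        obtain ⟨j, rfl⟩ := Nat.exists_eq_succ_of_ne_zero hi0
        exact ⟨j, by omega, rfl⟩
      · rintro ⟨j, hj, rfl⟩
        refine ⟨?_, j + 1, by omega, rfl⟩
        rw [← hy0]
        exact fun he => key 0 (j + 1) (by omega) (by omega) he.symm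
    have hS2 : S.erase x = (Finset.range k).image y := by
      ext z
      simp only [Finset.mem_erase, hS, Finset.mem_image, Finset.mem_range]
      constructor
      · rintro ⟨hz, i, hi, rfl⟩
        have hik : i ≠ k := by rintro rfl; exact hz hyk
        exact ⟨i, by omega, rfl⟩
      · rintro ⟨j, hj, rfl⟩
        refine ⟨?_, j, by omega, rfl⟩
        rw [← hyk]
        exact key j k hj le_rfl
    have hfy : ∀ i, f (y i) = y (i + 1) := fun i =>
      (Function.iterate_succ_apply' f i x').symm
    have hA : ∑ z ∈ S.erase x', R z (g z)
        = ∑ i ∈ Finset.range k, R (y (i + 1)) (y i) := by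
      rw [hS1, Finset.sum_image]
      · exact Finset.sum_congr rfl fun i hi => by
          rw [hgstep i (Finset.mem_range.mp hi)]
      · intro a ha b hb hab
        have := hy_inj (a + 1) (b + 1)
          (by have := Finset.mem_range.mp ha; omega)
          (by have := Finset.mem_range.mp hb; omega) hab
        omega
    have hB : ∑ z ∈ S.erase x, R z (f z)
        = ∑ i ∈ Finset.range k, R (y i) (y (i + 1)) := by
      rw [hS2, Finset.sum_image]
      · exact Finset.sum_congr rfl fun i _ => by rw [hfy]
      · intro a ha b hb hab
        exact hy_inj a b
          (by have := Finset.mem_range.mp ha; omega)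
          (by have := Finset.mem_range.mp hb; omega) hab
    have hT : ∑ z ∈ Finset.univ \ S, R z (g z)
        = ∑ z ∈ Finset.univ \ S, R z (f z) :=
      Finset.sum_congr rfl fun z hz => by
        rw [hgout z (Finset.mem_sdiff.mp hz).2]
    have htel : ∑ i ∈ Finset.range k,
        (R (y (i + 1)) (y i) - R (y i) (y (i + 1))) = φ x - φ x' := by
      have h1 : ∀ i, R (y (i + 1)) (y i) - R (y i) (y (i + 1))
          = φ (y (i + 1)) - φ (y i) := by
        intro i
        rw [hR, hR, max_comm]
        ring
      calc ∑ i ∈ Finset.range k, (R (y (i + 1)) (y i) - R (y i) (y (i + 1)))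
          = ∑ i ∈ Finset.range k, (φ (y (i + 1)) - φ (y i)) :=
            Finset.sum_congr rfl fun i _ => h1 i
        _ = φ (y k) - φ (y 0) := Finset.sum_range_sub (fun i => φ (y i)) k
        _ = φ x - φ x' := by rw [hyk, hy0]
    refine ⟨g, ⟨hgx', hreach'⟩, ?_⟩
    rw [hsplit x' hx'S, hsplit x hxS, hA, hB, hT]
    have := Finset.sum_sub_distrib (s := Finset.range k)
      (f := fun i => R (y (i + 1)) (y i)) (g := fun i => R (y i) (y (i + 1)))
    rw [this] at htel
    linarith

/-- With edge resistance `R(x,x') = r + max{φ x, φ x'} − φ x'` (`r > 0`) on the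
complete digraph over a finite set `X`: if the minimum total resistance over
spanning arborescences rooted at `x` is at most that rooted at `x'`, then
`φ x ≥ φ x'`. An arborescence rooted at `x` is encoded by its parent map `f`
(each non-root node `y` has the edge `y → f y` directed toward the root, and
iterating `f` from any node reaches `x`). -/
theorem min_resistance_tree_implies_potential_max
    {X : Type*} [Fintype X] (hcard : 2 ≤ Fintype.card X)
    (φ : X → ℝ) (r : ℝ) (hr : 0 < r)
    (R : X → X → ℝ) (hR : ∀ x x', R x x' = r + max (φ x) (φ x') - φ x')
    (isArb : (X → X) → X → Prop)
    (hisArb : ∀ f x, isArb f x ↔ (f x = x ∧ ∀ y, ∃ n, f^[n] y = x))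
    (res : (X → X) → X → ℝ)
    (hres : ∀ f x, res f x = ∑ y ∈ Finset.univ.erase x, R y (f y))
    (minRes : X → ℝ)
    (hminRes : ∀ x, minRes x = sInf {c : ℝ | ∃ f, isArb f x ∧ c = res f x})
    (x x' : X) (h : minRes x ≤ minRes x') :
    φ x' ≤ φ x := by
  have hne : ∀ z : X, {c : ℝ | ∃ f, isArb f z ∧ c = res f z}.Nonempty := by
    intro z
    exact ⟨res (fun _ => z) z, fun _ => z,
      (hisArb _ _).2 ⟨rfl, fun y => ⟨1, rfl⟩⟩, rfl⟩
  have hfin : ∀ z : X, {c : ℝ | ∃ f, isArb f z ∧ c = res f z}.Finite := by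
    intro z
    have : {c : ℝ | ∃ f, isArb f z ∧ c = res f z}
        = (fun f => res f z) '' {f | isArb f z} := by
      ext c
      simp only [Set.mem_setOf_eq, Set.mem_image]
      constructor
      · rintro ⟨f, hf, rfl⟩; exact ⟨f, hf, rfl⟩
      · rintro ⟨f, hf, rfl⟩; exact ⟨f, hf, rfl⟩
    rw [this]
    exact (Set.toFinite _).image _
  have hmem : minRes x ∈ {c : ℝ | ∃ f, isArb f x ∧ c = res f x} := by
    rw [hminRes]
    exact (hne x).csInf_mem (hfin x)
  obtain ⟨f0, hf0, hres0⟩ := hmem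
  obtain ⟨hfx0, hreach0⟩ := (hisArb f0 x).1 hf0
  obtain ⟨g, ⟨hg1, hg2⟩, hgsum⟩ :=
    reroot_arborescence φ r R hR f0 x x' hfx0 hreach0
  have hgmem : res g x' ∈ {c : ℝ | ∃ f, isArb f x' ∧ c = res f x'} :=
    ⟨g, (hisArb g x').2 ⟨hg1, hg2⟩, rfl⟩
  have hle : minRes x' ≤ res g x' := by
    rw [hminRes]
    exact csInf_le (hfin x').bddBelow hgmem
  have hval : res g x' = res f0 x + φ x - φ x' := by
    rw [hres g x', hres f0 x]
    exact hgsum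
  linarith
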